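/- Let N ≥ 1, let G be a closed subgroup of U_N with Haar probability measure μ, let I ⊆ {1,…,N} be nonempty, let k ≥ 1, and let e = (e_1,…,e_k) be a word with letters in {∘,•}. Let (ξ_π)_{π∈D} be a finite basis of Fix_e(G) = {ξ : {1,…,N}^k → ℂ : g^{⊗e} ξ = ξ for all g ∈ G}, let G_{kN}(π,σ) = Σ_{j∈{1,…,N}^k} conj(ξ_π(j)) ξ_σ(j) be the Gram matrix and W_{kN} = G_{kN}^{-1}, and for σ ∈ D set K_I(σ) = |I|^{-k/2} Σ_{b∈I^k} conj(ξ_σ(b)). Then for every multi-index i ∈ {1,…,N}^k one has ∫_G ∏_{a=1}^k ((g ξ_I)_{i_a})^{e_a} dμ(g) = Σ_{π,σ∈D} ξ_π(i) K_I(σ) W_{kN}(π,σ), where for a scalar x, x^∘ = x and x^• = conj(x). -/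

import Mathlib

open Matrix MeasureTheory

/-- `x^∘ = x` and `x^• = conj x`, for a scalar `x` (here `true` encodes `•`). -/
noncomputable def dec (b : Bool) (z : ℂ) : ℂ := if b then (starRingEnd ℂ) z else z

/-- The decorated tensor power `g^{⊗e}` of a matrix `g ∈ M_N(ℂ)`, for a word `e` with letters
in `{∘,•}` (here `true` encodes `•`): the matrix with entries `∏_a g_{i_a j_a}^{e_a}`. -/
noncomputable def decPow {N k : ℕ} (e : Fin k → Bool) (g : Matrix (Fin N) (Fin N) ℂ) :
    Matrix (Fin k → Fin N) (Fin k → Fin N) ℂ :=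
  Matrix.of fun i j => ∏ a, dec (e a) (g (i a) (j a))

/-- The space `Fix_e(G)` of vectors `ξ : {1,…,N}^k → ℂ` with `g^{⊗e} ξ = ξ` for all `g ∈ G`. -/
noncomputable def FixE {N k : ℕ} (G : Subgroup (Matrix.unitaryGroup (Fin N) ℂ))
    (e : Fin k → Bool) : Submodule ℂ ((Fin k → Fin N) → ℂ) where
  carrier := {ξ | ∀ g ∈ G, decPow e (g : Matrix (Fin N) (Fin N) ℂ) *ᵥ ξ = ξ}
  add_mem' := by
    intro a b ha hb g hg
    rw [Matrix.mulVec_add, ha g hg, hb g hg]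
  zero_mem' := by
    intro g hg
    rw [Matrix.mulVec_zero]
  smul_mem' := by
    intro c a ha g hg
    rw [Matrix.mulVec_smul, ha g hg]

/-- The unit vector `ξ_I ∈ ℂ^N`, with coordinates `1/√|I|` on `I` and `0` elsewhere. -/
noncomputable def xiI (N : ℕ) (I : Finset (Fin N)) : Fin N → ℂ :=
  fun i => if i ∈ I then ((1 / Real.sqrt I.card : ℝ) : ℂ) else 0

/-- We equip a closed subgroup `G ⊆ U_N` with its Borel σ-algebra. -/
noncomputable instance instMeasSubgroupUG {N : ℕ} (G : Subgroup (Matrix.unitaryGroup (Fin N) ℂ)) :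
    MeasurableSpace G := borel G

instance instBorelSubgroupUG {N : ℕ} (G : Subgroup (Matrix.unitaryGroup (Fin N) ℂ)) :
    BorelSpace G := ⟨rfl⟩

/-! The integrand is the `i`-th coordinate of `g^{⊗e} η` with `η = ξ_I^{⊗e}`, so the integral is
the `i`-th coordinate of `v = ∫ g^{⊗e} η dμ(g)`. Left invariance of `μ` makes `v` a fixed vector,
so `v = Σ_π c_π ξ_π`. Since `(g^{⊗e})^* = (g⁻¹)^{⊗e}` fixes every `ξ_σ`, each `⟨ξ_σ, g^{⊗e} η⟩`
equals `⟨ξ_σ, η⟩ = K_I(σ)`, hence `⟨ξ_σ, v⟩ = K_I(σ)`; this says `G_{kN} c = K_I`, so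
`c = W_{kN} K_I`. -/

lemma dec_mul (b : Bool) (x y : ℂ) : dec b (x * y) = dec b x * dec b y := by
  cases b <;> simp [dec]

lemma dec_sum {α : Type*} (s : Finset α) (b : Bool) (f : α → ℂ) :
    dec b (∑ x ∈ s, f x) = ∑ x ∈ s, dec b (f x) := by
  cases b <;> simp [dec]

lemma star_dec (b : Bool) (z : ℂ) : star (dec b z) = dec b (star z) := by
  cases b <;> simp [dec]

lemma norm_dec (b : Bool) (z : ℂ) : ‖dec b z‖ = ‖z‖ := by
  cases b <;> simp [dec]

@[fun_prop]
lemma continuous_dec (b : Bool) : Continuous (dec b) := by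
  cases b
  · exact continuous_id
  · exact continuous_star

section DecoratedTensorPower

variable {N k : ℕ} (e : Fin k → Bool)

noncomputable def decTensor (x : Fin N → ℂ) : (Fin k → Fin N) → ℂ :=
  fun j => ∏ a, dec (e a) (x (j a))

lemma prod_dec_sum_mul (f g : Fin k → Fin N → ℂ) :
    ∏ a, dec (e a) (∑ m, f a m * g a m) =
      ∑ j : Fin k → Fin N, (∏ a, dec (e a) (f a (j a))) * ∏ a, dec (e a) (g a (j a)) := by
  simp only [dec_sum, dec_mul, Finset.prod_univ_sum, Fintype.piFinset_univ, Finset.prod_mul_distrib]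

lemma decPow_mul (A B : Matrix (Fin N) (Fin N) ℂ) :
    decPow e (A * B) = decPow e A * decPow e B := by
  ext i j
  exact prod_dec_sum_mul e (fun a m => A (i a) m) (fun a m => B m (j a))

lemma decPow_mulVec_decTensor (A : Matrix (Fin N) (Fin N) ℂ) (x : Fin N → ℂ) :
    decPow e A *ᵥ decTensor e x = decTensor e (A *ᵥ x) := by
  ext i
  exact (prod_dec_sum_mul e (fun a m => A (i a) m) (fun _ m => x m)).symm

lemma conjTranspose_decPow (A : Matrix (Fin N) (Fin N) ℂ) :
    (decPow e A)ᴴ = decPow e Aᴴ := by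
  ext i j
  simp [decPow, star_dec]

lemma continuous_decPow_apply (i j : Fin k → Fin N) :
    Continuous fun A : Matrix (Fin N) (Fin N) ℂ => decPow e A i j := by
  simp only [decPow, of_apply]
  fun_prop

lemma norm_decPow_apply_le_one {A : Matrix (Fin N) (Fin N) ℂ} (hA : A ∈ unitaryGroup (Fin N) ℂ)
    (i j : Fin k → Fin N) : ‖decPow e A i j‖ ≤ 1 := by
  simp only [decPow, of_apply, norm_prod, norm_dec]
  exact Finset.prod_le_one (fun _ _ => norm_nonneg _) fun a _ => entry_norm_bound_of_unitary hA _ _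

end DecoratedTensorPower

lemma dec_xiI {N : ℕ} (b : Bool) (I : Finset (Fin N)) (m : Fin N) :
    dec b (xiI N I m) = xiI N I m := by
  unfold xiI
  split_ifs <;> simp [dec]

lemma decTensor_xiI {N k : ℕ} (e : Fin k → Bool) (I : Finset (Fin N)) (j : Fin k → Fin N) :
    decTensor e (xiI N I) j = if ∀ a, j a ∈ I then (((1 / √(I.card : ℝ)) ^ k : ℝ) : ℂ) else 0 := by
  simp only [decTensor, dec_xiI]
  simp only [xiI, Fintype.prod_ite_zero, Finset.prod_const, Finset.card_univ, Fintype.card_fin,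
    Complex.ofReal_pow]

lemma dotProduct_decTensor_xiI {N k : ℕ} (e : Fin k → Bool) (I : Finset (Fin N))
    (w : (Fin k → Fin N) → ℂ) :
    w ⬝ᵥ decTensor e (xiI N I) =
      ((1 / √((I.card : ℝ) ^ k) : ℝ) : ℂ) * ∑ b : Fin k → I, w (fun a => (b a : Fin N)) := by
  have hsqrt : √((I.card : ℝ) ^ k) = √(I.card : ℝ) ^ k := by
    rw [← Real.sqrt_sq (pow_nonneg (Real.sqrt_nonneg _) k), ← pow_mul, mul_comm, pow_mul,
      Real.sq_sqrt (Nat.cast_nonneg _)]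
  calc w ⬝ᵥ decTensor e (xiI N I)
      = ∑ j : {j : Fin k → Fin N // ∀ a, j a ∈ I}, w j * (((1 / √(I.card : ℝ)) ^ k : ℝ) : ℂ) := by
        simp only [dotProduct, decTensor_xiI, mul_ite, mul_zero]
        rw [← Finset.sum_filter, Finset.sum_subtype]
        simp
    _ = _ := by
        rw [← (Equiv.subtypePiEquivPi (p := fun (_ : Fin k) (m : Fin N) => m ∈ I)).symm.sum_comp,
          hsqrt, _root_.one_div_pow, Finset.mul_sum]
        exact Finset.sum_congr rfl fun b _ => mul_comm _ _

lemma conjTranspose_decPow_mulVec_of_mem_FixE {N k : ℕ} {G : Subgroup (unitaryGroup (Fin N) ℂ)}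
    {e : Fin k → Bool} {ζ : (Fin k → Fin N) → ℂ} (hζ : ζ ∈ FixE G e) {g} (hg : g ∈ G) :
    (decPow e (g : Matrix (Fin N) (Fin N) ℂ))ᴴ *ᵥ ζ = ζ := by
  rw [conjTranspose_decPow, ← star_eq_conjTranspose]
  exact hζ g⁻¹ (G.inv_mem hg)

lemma star_dotProduct_decPow_mulVec_of_mem_FixE {N k : ℕ}
    {G : Subgroup (unitaryGroup (Fin N) ℂ)} {e : Fin k → Bool} {ζ : (Fin k → Fin N) → ℂ}
    (hζ : ζ ∈ FixE G e) {g} (hg : g ∈ G) (η : (Fin k → Fin N) → ℂ) :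
    star ζ ⬝ᵥ (decPow e (g : Matrix (Fin N) (Fin N) ℂ) *ᵥ η) = star ζ ⬝ᵥ η := by
  rw [dotProduct_mulVec, ← conjTranspose_conjTranspose (decPow e _), ← star_mulVec,
    conjTranspose_decPow_mulVec_of_mem_FixE hζ hg]

section Integral

variable {X : Type*} [MeasurableSpace X] {μ : Measure X} {m n : Type*} [Fintype m] [Fintype n]

lemma integral_mulVec (A : Matrix m n ℂ) {f : X → n → ℂ} (hf : Integrable f μ) :
    ∫ x, A *ᵥ f x ∂μ = A *ᵥ ∫ x, f x ∂μ :=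
  (LinearMap.toContinuousLinearMap (mulVecLin A)).integral_comp_comm hf

lemma integral_dotProduct (w : n → ℂ) {f : X → n → ℂ} (hf : Integrable f μ) :
    ∫ x, w ⬝ᵥ f x ∂μ = w ⬝ᵥ ∫ x, f x ∂μ :=
  (LinearMap.toContinuousLinearMap (dotProductBilin ℂ ℂ w)).integral_comp_comm hf

end Integral

section HaarAverage

variable {N k : ℕ} {G : Subgroup (unitaryGroup (Fin N) ℂ)} (μ : Measure G) (e : Fin k → Bool)

lemma integrable_decPow_mulVec [IsFiniteMeasure μ] (η : (Fin k → Fin N) → ℂ) :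
    Integrable (fun g : G => decPow e (g : Matrix (Fin N) (Fin N) ℂ) *ᵥ η) μ := by
  have hentry (i j : Fin k → Fin N) :
      Integrable (fun g : G => decPow e (g : Matrix (Fin N) (Fin N) ℂ) i j) μ :=
    .of_bound ((continuous_decPow_apply e i j).comp (by fun_prop)).aestronglyMeasurable 1
      (ae_of_all _ fun g => norm_decPow_apply_le_one e (g : unitaryGroup (Fin N) ℂ).2 i j)
  exact .of_eval fun i => integrable_finsetSum _ fun j _ => (hentry i j).mul_const _

lemma integral_decPow_mulVec_mem_FixE [IsFiniteMeasure μ] [μ.IsMulLeftInvariant]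
    (η : (Fin k → Fin N) → ℂ) :
    ∫ g : G, decPow e (g : Matrix (Fin N) (Fin N) ℂ) *ᵥ η ∂μ ∈ FixE G e := by
  intro u hu
  rw [← integral_mulVec _ (integrable_decPow_mulVec μ e η)]
  simpa [mulVec_mulVec, ← decPow_mul] using
    integral_mul_left_eq_self (fun g : G => decPow e (g : Matrix (Fin N) (Fin N) ℂ) *ᵥ η)
      (⟨u, hu⟩ : G)

lemma star_dotProduct_integral_decPow_mulVec [IsProbabilityMeasure μ]
    {ζ : (Fin k → Fin N) → ℂ} (hζ : ζ ∈ FixE G e) (η : (Fin k → Fin N) → ℂ) :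
    star ζ ⬝ᵥ ∫ g : G, decPow e (g : Matrix (Fin N) (Fin N) ℂ) *ᵥ η ∂μ = star ζ ⬝ᵥ η := by
  rw [← integral_dotProduct _ (integrable_decPow_mulVec μ e η)]
  simp [star_dotProduct_decPow_mulVec_of_mem_FixE hζ (Subtype.prop _)]

end HaarAverage

theorem eq_sum_inv_gram_of_mem_span {𝕜 E ι : Type*} [RCLike 𝕜] [NormedAddCommGroup E]
    [InnerProductSpace 𝕜 E] [Fintype ι] [DecidableEq ι] {b : ι → E} (hb : LinearIndependent 𝕜 b)
    {v : E} (hv : v ∈ Submodule.span 𝕜 (Set.range b)) :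
    v = ∑ π, ∑ σ, ((gram 𝕜 b)⁻¹ π σ * inner 𝕜 (b σ) v) • b π := by
  obtain ⟨c, rfl⟩ := (Submodule.mem_span_range_iff_exists_fun 𝕜).mp hv
  have hinner : (fun σ => inner 𝕜 (b σ) (∑ π, c π • b π)) = gram 𝕜 b *ᵥ c := by
    ext σ
    simp [inner_sum, inner_smul_right, mulVec, dotProduct, gram_apply, mul_comm]
  have hc : (gram 𝕜 b)⁻¹ *ᵥ (gram 𝕜 b *ᵥ c) = c := by
    rw [mulVec_mulVec, nonsing_inv_mul _ (det_gram_ne_zero_iff_linearIndependent.mpr hb).isUnit,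
      one_mulVec]
  conv_lhs => rw [← hc, ← hinner]
  simp only [mulVec, dotProduct, Finset.sum_smul]

lemma apply_eq_sum_inv_gram_of_mem_span {ι m : Type*} [Fintype ι] [DecidableEq ι] [Fintype m]
    {ξ : ι → m → ℂ} (hξ : LinearIndependent ℂ ξ) {v : m → ℂ}
    (hv : v ∈ Submodule.span ℂ (Set.range ξ)) (i : m) :
    v i = ∑ π, ∑ σ, ξ π i * (star (ξ σ) ⬝ᵥ v) * (of fun π σ => star (ξ π) ⬝ᵥ ξ σ)⁻¹ π σ := by
  let toLp := (WithLp.linearEquiv 2 ℂ (m → ℂ)).symm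
  have hgram : gram ℂ (fun π => toLp (ξ π)) = of fun π σ => star (ξ π) ⬝ᵥ ξ σ := by
    ext π σ
    exact dotProduct_comm _ _
  have hb : LinearIndependent ℂ (fun π => toLp (ξ π)) := hξ.map' _ toLp.ker
  have hv' : toLp v ∈ Submodule.span ℂ (Set.range fun π => toLp (ξ π)) := by
    simpa [Submodule.map_span, ← Set.range_comp, Function.comp_def] using
      Submodule.mem_map_of_mem (f := toLp.toLinearMap) hv
  refine (congrArg (fun w => w i) (eq_sum_inv_gram_of_mem_span hb hv')).trans ?_
  simp only [hgram, WithLp.ofLp_sum, WithLp.ofLp_smul, Finset.sum_apply, Pi.smul_apply, smul_eq_mul]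
  refine Finset.sum_congr rfl fun π _ => Finset.sum_congr rfl fun σ _ => ?_
  rw [show inner ℂ (toLp (ξ σ)) (toLp v) = star (ξ σ) ⬝ᵥ v from dotProduct_comm _ _]
  change _ * _ * ξ π i = _
  ring

theorem stmt5_general (N : ℕ) (G : Subgroup (Matrix.unitaryGroup (Fin N) ℂ))
    (μ : Measure G) [IsProbabilityMeasure μ]
    [μ.IsMulLeftInvariant]
    (I : Finset (Fin N))
    (k : ℕ) (e : Fin k → Bool)
    (D : Type*) [Fintype D] [DecidableEq D]
    (ξ : D → ((Fin k → Fin N) → ℂ))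
    (hind : LinearIndependent ℂ ξ)
    (hspan : Submodule.span ℂ (Set.range ξ) = FixE G e)
    (Gm : Matrix D D ℂ)
    (hGm : ∀ π σ, Gm π σ = ∑ j : Fin k → Fin N, (starRingEnd ℂ) (ξ π j) * ξ σ j)
    (K : D → ℂ)
    (hK : ∀ σ, K σ = ((1 / Real.sqrt ((I.card : ℝ) ^ k) : ℝ) : ℂ) *
      ∑ b : Fin k → {x // x ∈ I}, (starRingEnd ℂ) (ξ σ (fun a => (b a : Fin N)))) :
    ∀ i : Fin k → Fin N,
      (∫ g : G, ∏ a, dec (e a)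
          ((((g : Matrix.unitaryGroup (Fin N) ℂ) : Matrix (Fin N) (Fin N) ℂ) *ᵥ xiI N I)
            (i a)) ∂μ) =
        ∑ π : D, ∑ σ : D, ξ π i * K σ * Gm⁻¹ π σ := by
  intro i
  have hintegral : (∫ g : G, ∏ a, dec (e a)
      ((((g : Matrix.unitaryGroup (Fin N) ℂ) : Matrix (Fin N) (Fin N) ℂ) *ᵥ xiI N I) (i a)) ∂μ)
      = (∫ g : G, decPow e (g : Matrix (Fin N) (Fin N) ℂ) *ᵥ decTensor e (xiI N I) ∂μ) i := by
    rw [eval_integral (integrable_decPow_mulVec μ e _).eval]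
    simp only [decPow_mulVec_decTensor]
    rfl
  set v := ∫ g : G, decPow e (g : Matrix (Fin N) (Fin N) ℂ) *ᵥ decTensor e (xiI N I) ∂μ
  have hv : v ∈ Submodule.span ℂ (Set.range ξ) :=
    hspan ▸ integral_decPow_mulVec_mem_FixE μ e _
  have hKv : ∀ σ, K σ = star (ξ σ) ⬝ᵥ v := fun σ => by
    rw [star_dotProduct_integral_decPow_mulVec μ e (hspan ▸ Submodule.subset_span ⟨σ, rfl⟩),
      dotProduct_decTensor_xiI, hK]
    rfl
  have hGm' : Gm = of fun π σ => star (ξ π) ⬝ᵥ ξ σ := Matrix.ext hGm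
  rw [hintegral, apply_eq_sum_inv_gram_of_mem_span hind hv i, hGm']
  simp only [hKv]

/-- The Weingarten formula for the affine homogeneous space `X_{G,I}` in the classical case:
`∫_G ∏_a ((g ξ_I)_{i_a})^{e_a} dμ(g) = Σ_{π,σ ∈ D} ξ_π(i) K_I(σ) W_{kN}(π,σ)`, where
`K_I(σ) = |I|^{-k/2} Σ_{b ∈ I^k} conj(ξ_σ(b))` and `W_{kN}` is the inverse Gram matrix of a
basis `(ξ_π)_{π ∈ D}` of `Fix_e(G)`. -/
theorem stmt5 (N : ℕ) (hN : 1 ≤ N) (G : Subgroup (Matrix.unitaryGroup (Fin N) ℂ))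
    (hG : IsClosed (G : Set (Matrix.unitaryGroup (Fin N) ℂ)))
    (μ : Measure G) [IsProbabilityMeasure μ]
    [μ.IsMulLeftInvariant] [μ.IsMulRightInvariant]
    (I : Finset (Fin N)) (hI : I.Nonempty)
    (k : ℕ) (hk : 1 ≤ k) (e : Fin k → Bool)
    (D : Type*) [Fintype D] [DecidableEq D]
    (ξ : D → ((Fin k → Fin N) → ℂ))
    (hmem : ∀ π, ξ π ∈ FixE G e)
    (hind : LinearIndependent ℂ ξ)
    (hspan : Submodule.span ℂ (Set.range ξ) = FixE G e)
    (Gm : Matrix D D ℂ)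
    (hGm : ∀ π σ, Gm π σ = ∑ j : Fin k → Fin N, (starRingEnd ℂ) (ξ π j) * ξ σ j)
    (K : D → ℂ)
    (hK : ∀ σ, K σ = ((1 / Real.sqrt ((I.card : ℝ) ^ k) : ℝ) : ℂ) *
      ∑ b : Fin k → {x // x ∈ I}, (starRingEnd ℂ) (ξ σ (fun a => (b a : Fin N)))) :
    ∀ i : Fin k → Fin N,
      (∫ g : G, ∏ a, dec (e a)
          ((((g : Matrix.unitaryGroup (Fin N) ℂ) : Matrix (Fin N) (Fin N) ℂ) *ᵥ xiI N I)
            (i a)) ∂μ) =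
        ∑ π : D, ∑ σ : D, ξ π i * K σ * Gm⁻¹ π σ :=
  stmt5_general N G μ I k e D ξ hind hspan Gm hGm K hK
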